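/- arXiv:2407.04645 — 3 statements merged into one kernel-verified Lean document; each statement's English description precedes it below -/
import Mathlib

section
/- Let ω be a radial weight. Then for all z, ζ ∈ 𝔻: 2(1 − conj(z)ζ) B^ω_z(ζ) = 1/ω₁ + Σ_{n=1}^∞ ( (ω_{(1,2)})_{2n−1} / (ω_{2n+1} ω_{2n−1}) ) (conj(z)ζ)^n, where (ω_{(1,2)})_x = ∫_0^1 r^x (1 − r²) ω(r) dr, and the series converges absolutely. -/
open MeasureTheory Real Set

noncomputable section

/-- The open unit disc in ℂ. -/
def unitDisc : Set ℂ := {z : ℂ | ‖z‖ < 1}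

/-- Normalized area measure dA = dx dy / π on ℂ. -/
def dA : Measure ℂ := (ENNReal.ofReal (1 / Real.pi)) • (volume : Measure ℂ)

/-- Tail of a radial weight: ω̂(r) = ∫_r^1 ω(s) ds. -/
def wTail (ω : ℂ → ℝ) (r : ℝ) : ℝ := ∫ s in r..1, ω ((s : ℂ))

/-- Moments: ω_x = ∫_0^1 r^x ω(r) dr (real exponent). -/
def wMoment (ω : ℂ → ℝ) (x : ℝ) : ℝ := ∫ r in (0:ℝ)..1, r ^ x * ω ((r : ℂ))

/-- A radial weight: nonnegative, radial, integrable on 𝔻, with strictly positive tails. -/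
structure IsRadialWeight (ω : ℂ → ℝ) : Prop where
  nonneg : ∀ z, 0 ≤ ω z
  radial : ∀ z : ℂ, ω z = ω ((‖z‖ : ℂ))
  integrable : IntegrableOn ω unitDisc dA
  tailPos : ∀ r : ℝ, 0 ≤ r → r < 1 → 0 < wTail ω r

/-- The class D̂ of upper doubling radial weights. -/
def Dhat (ω : ℂ → ℝ) : Prop :=
  ∃ C : ℝ, 0 < C ∧ ∀ r : ℝ, 0 ≤ r → r < 1 → wTail ω r ≤ C * wTail ω ((1 + r) / 2)

/-- The class Ď. -/
def Dcheck (ω : ℂ → ℝ) : Prop :=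
  ∃ C K : ℝ, 1 < C ∧ 1 < K ∧ ∀ r : ℝ, 0 ≤ r → r < 1 →
    C * wTail ω (1 - (1 - r) / K) ≤ wTail ω r

/-- The class D = D̂ ∩ Ď. -/
def Dclass (ω : ℂ → ℝ) : Prop := Dhat ω ∧ Dcheck ω

/-- The Bergman reproducing kernel of A²_ω. -/
def bergmanKernel (ω : ℂ → ℝ) (z ζ : ℂ) : ℂ :=
  ∑' n : ℕ, (starRingEnd ℂ z * ζ) ^ n / (2 * ((wMoment ω (2 * (n : ℝ) + 1) : ℝ) : ℂ))

/-- The Bergman projection P_ω. -/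
def bergmanProj (ω : ℂ → ℝ) (g : ℂ → ℂ) (z : ℂ) : ℂ :=
  ∫ ζ in unitDisc, g ζ * starRingEnd ℂ (bergmanKernel ω z ζ) * ((ω ζ : ℝ) : ℂ) ∂dA

/-- The small Hankel operator h^ω_φ. -/
def hankel (ω : ℂ → ℝ) (φ g : ℂ → ℂ) (z : ℂ) : ℂ :=
  ∫ ζ in unitDisc, φ ζ * g ζ * bergmanKernel ω z ζ * ((ω ζ : ℝ) : ℂ) ∂dA

/-- The transform V_{ω,ν}. -/
def Vop (ω ν : ℂ → ℝ) (f : ℂ → ℂ) (z : ℂ) : ℂ :=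
  ((ν z : ℝ) : ℂ) *
    ∫ ζ in unitDisc, f ζ * starRingEnd ℂ (bergmanKernel (fun w => ω w * ν w) z ζ) *
      ((ω ζ : ℝ) : ℂ) ∂dA

/-- ‖g‖_{L^p_ω} = (∫_𝔻 |g|^p ω dA)^{1/p}. -/
def LpNorm (ω : ℂ → ℝ) (p : ℝ) (g : ℂ → ℂ) : ℝ :=
  (∫ z in unitDisc, ‖g z‖ ^ p * ω z ∂dA) ^ (1 / p)

/-- f ∈ L¹_{ω_log}. -/
def MemL1log (ω : ℂ → ℝ) (f : ℂ → ℂ) : Prop :=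
  AEStronglyMeasurable f (dA.restrict unitDisc) ∧
  IntegrableOn (fun z => ‖f z‖ * Real.log (Real.exp 1 / (1 - ‖z‖)) * ω z)
    unitDisc dA

/-- A bounded analytic function on the unit disc. -/
def BoundedAnalytic (g : ℂ → ℂ) : Prop :=
  DifferentiableOn ℂ g unitDisc ∧ ∃ M : ℝ, ∀ z ∈ unitDisc, ‖g z‖ ≤ M

/-- The set of Bloch seminorm values (1-|z|²)|f'(z)|, z ∈ 𝔻. -/
def blochSet (f : ℂ → ℂ) : Set ℝ :=
  (fun z => (1 - ‖z‖ ^ 2) * ‖deriv f z‖) '' unitDisc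

/-- The Bloch norm ‖f‖_ℬ = |f(0)| + sup_{z∈𝔻}(1-|z|²)|f'(z)|. -/
def blochNorm (f : ℂ → ℂ) : ℝ := ‖f 0‖ + sSup (blochSet f)

/-- Membership in the Bloch space ℬ. -/
def MemBloch (f : ℂ → ℂ) : Prop :=
  DifferentiableOn ℂ f unitDisc ∧ BddAbove (blochSet f)

/-- Admissible bounds M > 0 for h^ω_{conj f} : A^p_ω → conj(A^p_ω). -/
def hankelBoundSet (ω : ℂ → ℝ) (p : ℝ) (f : ℂ → ℂ) : Set ℝ :=
  {M : ℝ | 0 < M ∧ ∀ g : ℂ → ℂ, BoundedAnalytic g →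
    LpNorm ω p (hankel ω (fun ζ => starRingEnd ℂ (f ζ)) g) ≤ M * LpNorm ω p g}

/-- Operator norm of the small Hankel operator: least admissible bound. -/
def hankelNorm (ω : ℂ → ℝ) (p : ℝ) (f : ℂ → ℂ) : ℝ := sInf (hankelBoundSet ω p f)

/-- The set of values |V_{ω,ν}(f)(z)|, z ∈ 𝔻. -/
def VSet (ω ν : ℂ → ℝ) (f : ℂ → ℂ) : Set ℝ :=
  (fun z => ‖Vop ω ν f z‖) '' unitDisc

/-- sup_{z∈𝔻} |V_{ω,ν}(f)(z)|. -/
def VSup (ω ν : ℂ → ℝ) (f : ℂ → ℂ) : ℝ := sSup (VSet ω ν f)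

/-- A nonnegative radial function on 𝔻. -/
def IsRadialNonneg (ν : ℂ → ℝ) : Prop :=
  (∀ z, 0 ≤ ν z) ∧ ∀ z : ℂ, ν z = ν ((‖z‖ : ℂ))

/-- The tail of ν viewed as a radial function on ℂ: z ↦ ν̂(|z|). -/
def tailFun (ν : ℂ → ℝ) : ℂ → ℝ := fun z => wTail ν (‖z‖)

/-!
Write w = conj(z) ζ and a_n = w^n / ω_{2n+1}, so that 2 B^ω_z(ζ) = ∑ a_n. Since
ω_{2n+1} ≥ ρ^{2n+1} ω̂(ρ) for every ρ < 1, the a_n decay geometrically when |w| < 1. Then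
(1 - w) ∑ a_n = a_0 + ∑ (a_{n+1} - w a_n), and a_{n+1} - w a_n is the n-th term of the claimed
series because ω_{2n+1} - ω_{2n+3} = ∫_0^1 r^{2n+1} (1 - r²) ω(r) dr.
-/

theorem one_sub_mul_tsum_eq_add_tsum_succ_sub_mul {R : Type*} [Ring R] [TopologicalSpace R]
    [IsTopologicalRing R] [T2Space R] {a : ℕ → R} (ha : Summable a) (w : R) :
    (1 - w) * ∑' n, a n = a 0 + ∑' n, (a (n + 1) - w * a n) := by
  rw [((summable_nat_add_iff 1).mpr ha).tsum_sub (ha.mul_left w), ha.tsum_mul_left,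
    ← add_sub_assoc, ← ha.tsum_eq_zero_add, sub_mul, one_mul]

theorem summable_norm_succ_sub_mul {R : Type*} [SeminormedRing R] {a : ℕ → R}
    (ha : Summable (fun n => ‖a n‖)) (w : R) :
    Summable (fun n => ‖a (n + 1) - w * a n‖) := by
  refine .of_nonneg_of_le (fun n => norm_nonneg _) (fun n => ?_)
    (((summable_nat_add_iff 1).mpr ha).add (ha.mul_left ‖w‖))
  exact (norm_sub_le _ _).trans (add_le_add le_rfl (norm_mul_le _ _))

namespace IsRadialWeight

variable {ω : ℂ → ℝ} (hω : IsRadialWeight ω)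
include hω

theorem integrableOn_Ioc_zero_one : IntegrableOn (fun s : ℝ => ω s) (Ioc 0 1) := by
  by_contra h
  have h0 := hω.tailPos 0 le_rfl one_pos
  rw [wTail, intervalIntegral.integral_of_le zero_le_one, integral_undef h] at h0
  exact h0.false

theorem integrableOn_rpow_mul {x : ℝ} (hx : 0 ≤ x) :
    IntegrableOn (fun r : ℝ => r ^ x * ω r) (Ioc 0 1) := by
  refine hω.integrableOn_Ioc_zero_one.mono'
    ((Real.continuous_rpow_const hx).aestronglyMeasurable.mul
      hω.integrableOn_Ioc_zero_one.aestronglyMeasurable) ?_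
  filter_upwards [ae_restrict_mem measurableSet_Ioc] with r hr
  rw [norm_mul, Real.norm_of_nonneg (hω.nonneg _)]
  refine mul_le_of_le_one_left (hω.nonneg _) ?_
  rw [Real.norm_of_nonneg (Real.rpow_nonneg hr.1.le x)]
  exact Real.rpow_le_one hr.1.le hr.2 hx

theorem intervalIntegrable_rpow_mul {x a b : ℝ} (hx : 0 ≤ x) (ha : 0 ≤ a) (hab : a ≤ b)
    (hb : b ≤ 1) : IntervalIntegrable (fun r : ℝ => r ^ x * ω r) volume a b :=
  (intervalIntegrable_iff_integrableOn_Ioc_of_le hab).mpr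
    ((hω.integrableOn_rpow_mul hx).mono_set (Ioc_subset_Ioc ha hb))

theorem rpow_mul_wTail_le_wMoment {x ρ : ℝ} (hx : 0 ≤ x) (hρ0 : 0 ≤ ρ) (hρ1 : ρ ≤ 1) :
    ρ ^ x * wTail ω ρ ≤ wMoment ω x := by
  have hhead : 0 ≤ ∫ r in (0 : ℝ)..ρ, r ^ x * ω r :=
    intervalIntegral.integral_nonneg hρ0 fun r hr =>
      mul_nonneg (Real.rpow_nonneg hr.1 x) (hω.nonneg _)
  have htail : ∫ r in ρ..1, ρ ^ x * ω r ≤ ∫ r in ρ..1, r ^ x * ω r := by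
    refine intervalIntegral.integral_mono_on hρ1 ?_
      (hω.intervalIntegrable_rpow_mul hx hρ0 hρ1 le_rfl) fun r hr =>
        mul_le_mul_of_nonneg_right (Real.rpow_le_rpow hρ0 hr.1 hx) (hω.nonneg _)
    simpa using (hω.intervalIntegrable_rpow_mul le_rfl hρ0 hρ1 le_rfl).const_mul (ρ ^ x)
  rw [wMoment, ← intervalIntegral.integral_add_adjacent_intervals
    (hω.intervalIntegrable_rpow_mul hx le_rfl hρ0 hρ1)
    (hω.intervalIntegrable_rpow_mul hx hρ0 hρ1 le_rfl), wTail,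
    ← intervalIntegral.integral_const_mul]
  linarith

theorem wMoment_pos {x : ℝ} (hx : 0 ≤ x) : 0 < wMoment ω x :=
  (mul_pos (Real.rpow_pos_of_pos one_half_pos x)
    (hω.tailPos _ one_half_pos.le one_half_lt_one)).trans_le
    (hω.rpow_mul_wTail_le_wMoment hx one_half_pos.le one_half_lt_one.le)

theorem wMoment_sub_wMoment_add_two {x : ℝ} (hx : 0 ≤ x) :
    wMoment ω x - wMoment ω (x + 2) = ∫ r in (0 : ℝ)..1, r ^ x * (1 - r ^ 2) * ω r := by
  rw [wMoment, wMoment, ← intervalIntegral.integral_sub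
    (hω.intervalIntegrable_rpow_mul hx le_rfl zero_le_one le_rfl)
    (hω.intervalIntegrable_rpow_mul (by positivity) le_rfl zero_le_one le_rfl)]
  refine intervalIntegral.integral_congr fun r hr => ?_
  rw [uIcc_of_le zero_le_one] at hr
  simp only [Real.rpow_add' hr.1 (by positivity : x + 2 ≠ 0), Real.rpow_two]
  ring

theorem summable_norm_pow_div_wMoment {w : ℂ} (hw : ‖w‖ < 1) :
    Summable (fun n : ℕ => ‖w ^ n / (wMoment ω (2 * n + 1) : ℂ)‖) := by
  obtain ⟨s, hws, hs1⟩ := exists_between hw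
  have hs0 : 0 < s := (norm_nonneg w).trans_lt hws
  set ρ := Real.sqrt s
  have hρ0 : 0 < ρ := Real.sqrt_pos.mpr hs0
  have hρ1 : ρ ≤ 1 := Real.sqrt_le_one.mpr hs1.le
  have hT : 0 < wTail ω ρ :=
    hω.tailPos ρ hρ0.le ((Real.sqrt_lt' one_pos).mpr (by simpa using hs1))
  have hbound : ∀ n : ℕ, ‖w ^ n / (wMoment ω (2 * n + 1) : ℂ)‖ ≤
      (ρ * wTail ω ρ)⁻¹ * (‖w‖ / s) ^ n := by
    intro n
    have hlow : ρ ^ (2 * n + 1) * wTail ω ρ ≤ wMoment ω (2 * n + 1) := by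
      simpa [← Real.rpow_natCast] using
        hω.rpow_mul_wTail_le_wMoment (x := 2 * n + 1) (by positivity) hρ0.le hρ1
    have hρpow : ρ ^ (2 * n + 1) = s ^ n * ρ := by
      rw [pow_succ, pow_mul, Real.sq_sqrt hs0.le]
    rw [hρpow] at hlow
    rw [norm_div, norm_pow, Complex.norm_real,
      Real.norm_of_nonneg (hω.wMoment_pos (by positivity)).le, div_pow]
    calc ‖w‖ ^ n / wMoment ω (2 * n + 1) ≤ ‖w‖ ^ n / (s ^ n * ρ * wTail ω ρ) :=
          div_le_div_of_nonneg_left (by positivity) (by positivity) hlow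
      _ = (ρ * wTail ω ρ)⁻¹ * (‖w‖ ^ n / s ^ n) := by field_simp
  exact .of_nonneg_of_le (fun n => norm_nonneg _) hbound
    ((summable_geometric_of_lt_one (by positivity) ((div_lt_one hs0).mpr hws)).mul_left _)

theorem coeff_mul_pow_eq_sub (w : ℂ) (n : ℕ) :
    (((∫ r in (0 : ℝ)..1, r ^ (2 * (n : ℝ) + 1) * (1 - r ^ 2) * ω r) /
        (wMoment ω (2 * (n : ℝ) + 3) * wMoment ω (2 * (n : ℝ) + 1)) : ℝ) : ℂ) *
        w ^ (n + 1) =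
      w ^ (n + 1) / (wMoment ω (2 * (n + 1 : ℕ) + 1) : ℂ) -
        w * (w ^ n / (wMoment ω (2 * n + 1) : ℂ)) := by
  have hA : (wMoment ω (2 * n + 1) : ℂ) ≠ 0 :=
    Complex.ofReal_ne_zero.mpr (hω.wMoment_pos (by positivity)).ne'
  have hB : (wMoment ω (2 * n + 1 + 2) : ℂ) ≠ 0 :=
    Complex.ofReal_ne_zero.mpr (hω.wMoment_pos (by positivity)).ne'
  rw [← hω.wMoment_sub_wMoment_add_two (by positivity),
    show (2 * ((n + 1 : ℕ) : ℝ) + 1) = 2 * n + 1 + 2 by push_cast; ring,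
    show (2 * (n : ℝ) + 3) = 2 * n + 1 + 2 by ring]
  push_cast
  field_simp
  ring

end IsRadialWeight

/-- series expansion of 2(1 - conj(z)ζ)B^ω_z(ζ). -/
theorem stmt_7 (ω : ℂ → ℝ) (hω : IsRadialWeight ω) (z ζ : ℂ) (hz : z ∈ unitDisc)
    (hζ : ζ ∈ unitDisc) :
    Summable (fun n : ℕ =>
      ‖(((∫ r in (0:ℝ)..1, r ^ (2 * (n : ℝ) + 1) * (1 - r ^ 2) * ω ((r : ℂ))) /
          (wMoment ω (2 * (n : ℝ) + 3) * wMoment ω (2 * (n : ℝ) + 1)) : ℝ) : ℂ) *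
        (starRingEnd ℂ z * ζ) ^ (n + 1)‖) ∧
    2 * (1 - starRingEnd ℂ z * ζ) * bergmanKernel ω z ζ =
      1 / ((wMoment ω 1 : ℝ) : ℂ) +
        ∑' n : ℕ,
          (((∫ r in (0:ℝ)..1, r ^ (2 * (n : ℝ) + 1) * (1 - r ^ 2) * ω ((r : ℂ))) /
            (wMoment ω (2 * (n : ℝ) + 3) * wMoment ω (2 * (n : ℝ) + 1)) : ℝ) : ℂ) *
          (starRingEnd ℂ z * ζ) ^ (n + 1) := by
  set w := starRingEnd ℂ z * ζ
  have hw : ‖w‖ < 1 := by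
    rw [norm_mul, Complex.norm_conj]
    exact mul_lt_one_of_nonneg_of_lt_one_left (norm_nonneg z) hz hζ.le
  set a : ℕ → ℂ := fun n => w ^ n / (wMoment ω (2 * n + 1) : ℂ)
  have ha : Summable (fun n => ‖a n‖) := hω.summable_norm_pow_div_wMoment hw
  have hkernel : 2 * (1 - w) * bergmanKernel ω z ζ = (1 - w) * ∑' n, a n := by
    rw [bergmanKernel, show (fun n : ℕ => w ^ n / (2 * (wMoment ω (2 * n + 1) : ℂ))) =
      fun n => a n / 2 by ext n; simp only [a]; ring, tsum_div_const]
    ring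
  simp only [hω.coeff_mul_pow_eq_sub w]
  refine ⟨summable_norm_succ_sub_mul ha w, ?_⟩
  rw [hkernel, one_sub_mul_tsum_eq_add_tsum_succ_sub_mul ha.of_norm]
  simp [a]
end
end

section
/- Let ω ∈ D̂, let k ∈ ℕ, and let n₁,…,n_k ∈ ℕ and y₁,…,y_k ∈ ℕ, with N = n₁ + ⋯ + n_k. Then there exists a constant C = C(ω, N) > 0 such that for all x > 0: ∫_0^1 r^x (Π_{j=1}^k (1 − r^{y_j})^{n_j}) ω(r) dr ≤ C (Π_{j=1}^k y_j^{n_j}) · ω_x / x^N. -/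
open MeasureTheory Real Set

noncomputable section

/-!
Since `1 - r ^ y ≤ y (1 - r)` and `x (1 - r) r ^ (x / 2N) ≤ 2N`, the integrand is at most
`(∏ yⱼ ^ nⱼ) (2N) ^ N x ^ (-N) r ^ (x / 2) ω(r)`, so it suffices to show `ω_{x/2} ≤ C ω_x`.
By the layer-cake formula `ω_p = ∫₀¹ ω̂(t ^ (1/p)) dt`, this follows pointwise from
`ω̂(u²) ≤ C ω̂((1 + u²)/2) ≤ C ω̂(u)`, which is where `ω ∈ D̂` enters.
-/

theorem one_sub_pow_le_mul_one_sub {r : ℝ} (hr : -1 ≤ r) (n : ℕ) : 1 - r ^ n ≤ n * (1 - r) := by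
  have := one_add_mul_le_pow (a := r - 1) (by linarith) n
  simp only [add_sub_cancel] at this
  linarith

theorem prod_one_sub_pow_le {ι : Type*} (s : Finset ι) (n y : ι → ℕ) {r : ℝ} (hr0 : 0 ≤ r)
    (hr1 : r ≤ 1) :
    ∏ j ∈ s, (1 - r ^ y j) ^ n j ≤ (∏ j ∈ s, (y j : ℝ) ^ n j) * (1 - r) ^ (∑ j ∈ s, n j) := by
  rw [← Finset.prod_pow_eq_pow_sum, ← Finset.prod_mul_distrib]
  have hy : ∀ j, 0 ≤ 1 - r ^ y j := fun j => by linarith [pow_le_one₀ hr0 hr1 (n := y j)]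
  refine Finset.prod_le_prod (fun j _ => pow_nonneg (hy j) _) fun j _ => ?_
  rw [← mul_pow]
  exact pow_le_pow_left₀ (hy j) (one_sub_pow_le_mul_one_sub (by linarith) _) _

theorem mul_one_sub_mul_rpow_le_one {a r : ℝ} (ha : 0 < a) (hr : 0 ≤ r) :
    a * (1 - r) * r ^ a ≤ 1 := by
  rcases hr.eq_or_lt with rfl | hr
  · simp [Real.zero_rpow ha.ne']
  have hv : 0 < r ^ a := Real.rpow_pos_of_pos hr a
  have hlog_r : a * (1 - r) ≤ -Real.log (r ^ a) := by
    rw [Real.log_rpow hr]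
    nlinarith [Real.log_le_sub_one_of_pos hr]
  have hlog_v : -Real.log (r ^ a) ≤ (r ^ a)⁻¹ - 1 := by
    rw [← Real.log_inv]
    exact Real.log_le_sub_one_of_pos (inv_pos.mpr hv)
  calc a * (1 - r) * r ^ a ≤ ((r ^ a)⁻¹ - 1) * r ^ a :=
        mul_le_mul_of_nonneg_right (hlog_r.trans hlog_v) hv.le
    _ = 1 - r ^ a := by field_simp
    _ ≤ 1 := by linarith

theorem pow_mul_one_sub_mul_rpow_le (N : ℕ) {x r : ℝ} (hx : 0 < x) (hr0 : 0 ≤ r) (hr1 : r ≤ 1) :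
    (x * (1 - r)) ^ N * r ^ x ≤ (2 * N) ^ N * r ^ (x / 2) := by
  rcases N.eq_zero_or_pos with rfl | hN
  · simpa using Real.rpow_le_rpow_of_exponent_ge' hr0 hr1 (by positivity) (by linarith)
  set a := x / (2 * N) with ha
  have hNR : (0 : ℝ) < N := by exact_mod_cast hN
  have hra : (r ^ a) ^ N = r ^ (x / 2) := by
    rw [← Real.rpow_mul_natCast hr0, ha]
    congr 1
    field_simp
  have hbase : x * (1 - r) * r ^ a ≤ 2 * N := by
    calc x * (1 - r) * r ^ a = 2 * N * (a * (1 - r) * r ^ a) := by rw [ha]; field_simp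
      _ ≤ 2 * N := mul_le_of_le_one_right (by positivity)
          (mul_one_sub_mul_rpow_le_one (by positivity) hr0)
  have hsplit : r ^ x = r ^ (x / 2) * r ^ (x / 2) := by
    rw [← Real.rpow_add' hr0 (by positivity), add_halves]
  calc (x * (1 - r)) ^ N * r ^ x = (x * (1 - r) * r ^ a) ^ N * r ^ (x / 2) := by
        rw [mul_pow (x * (1 - r)), hra, hsplit]; ring
    _ ≤ (2 * N) ^ N * r ^ (x / 2) := by gcongr

theorem rpow_mul_prod_one_sub_pow_le {ι : Type*} (s : Finset ι) (n y : ι → ℕ) {x r : ℝ}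
    (hx : 0 < x) (hr0 : 0 ≤ r) (hr1 : r ≤ 1) :
    r ^ x * ∏ j ∈ s, (1 - r ^ y j) ^ n j ≤
      (∏ j ∈ s, (y j : ℝ) ^ n j) * (2 * ∑ j ∈ s, n j) ^ (∑ j ∈ s, n j) /
        x ^ (∑ j ∈ s, n j) * r ^ (x / 2) := by
  set N := ∑ j ∈ s, n j
  have key := pow_mul_one_sub_mul_rpow_le N hx hr0 hr1
  rw [mul_pow] at key
  calc r ^ x * ∏ j ∈ s, (1 - r ^ y j) ^ n j
      ≤ r ^ x * ((∏ j ∈ s, (y j : ℝ) ^ n j) * (1 - r) ^ N) := by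
        gcongr
        exact prod_one_sub_pow_le s n y hr0 hr1
    _ = (∏ j ∈ s, (y j : ℝ) ^ n j) / x ^ N * (x ^ N * (1 - r) ^ N * r ^ x) := by
        field_simp
    _ ≤ (∏ j ∈ s, (y j : ℝ) ^ n j) / x ^ N * ((2 * N) ^ N * r ^ (x / 2)) := by gcongr
    _ = _ := by ring

theorem IsRadialWeight.intervalIntegrable {ω : ℂ → ℝ} (hω : IsRadialWeight ω) :
    IntervalIntegrable (fun s : ℝ => ω s) volume 0 1 := by
  by_contra h
  -- a non-integrable interval integral is `0` by convention, contradicting `wTail ω 0 > 0`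
  have := hω.tailPos 0 le_rfl zero_lt_one
  rw [wTail, intervalIntegral.integral_undef h] at this
  exact this.false

theorem wTail_antitoneOn {ω : ℂ → ℝ} (hω : IntervalIntegrable (fun s : ℝ => ω s) volume 0 1)
    (h0 : ∀ s ∈ Icc (0 : ℝ) 1, 0 ≤ ω s) : AntitoneOn (wTail ω) (Icc 0 1) := by
  intro a ha b hb hab
  refine intervalIntegral.integral_mono_interval hab hb.2 le_rfl
    (ae_restrict_of_forall_mem measurableSet_Ioc fun s hs => h0 s ⟨ha.1.trans hs.1.le, hs.2⟩)
    (hω.mono_set ?_)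
  exact uIcc_subset_uIcc (by simp [ha.1, ha.2]) (by simp)

theorem Dhat.wTail_sq_le {ω : ℂ → ℝ} (hD : Dhat ω) (hmono : AntitoneOn (wTail ω) (Icc 0 1)) :
    ∃ C, 0 < C ∧ ∀ u ∈ Icc (0 : ℝ) 1, wTail ω (u ^ 2) ≤ C * wTail ω u := by
  obtain ⟨C, hC, hdoubling⟩ := hD
  refine ⟨C, hC, fun u hu => ?_⟩
  rcases hu.2.eq_or_lt with rfl | hu1
  · simp [wTail]
  have hsq : u ^ 2 < 1 := pow_lt_one₀ hu.1 hu1 two_ne_zero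
  calc wTail ω (u ^ 2) ≤ C * wTail ω ((1 + u ^ 2) / 2) := hdoubling _ (sq_nonneg u) hsq
    _ ≤ C * wTail ω u := by
        gcongr
        exact hmono hu ⟨by positivity, by linarith⟩ (by nlinarith [sq_nonneg (u - 1)])

theorem wMoment_eq_integral_wTail {ω : ℂ → ℝ}
    (hω : IntervalIntegrable (fun s : ℝ => ω s) volume 0 1) {p : ℝ} (hp : 0 < p) :
    wMoment ω p = ∫ t in (0 : ℝ)..1, wTail ω (t ^ p⁻¹) := by
  set μ := volume.restrict (Ioc (0 : ℝ) 1)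
  set K : ℝ × ℝ → ℝ := {q | q.1 < q.2 ^ p}.indicator fun q => ω q.2
  have hK : Integrable K (μ.prod μ) :=
    (hω.1.comp_snd μ).indicator (measurableSet_lt measurable_fst (measurable_snd.pow_const p))
  have h_t : ∀ r ∈ Ioc (0 : ℝ) 1, ∫ t, K (t, r) ∂μ = r ^ p * ω r := by
    intro r hr
    have hrp : r ^ p ≤ 1 := Real.rpow_le_one hr.1.le hr.2 hp.le
    have hset : Iio (r ^ p) ∩ Ioc 0 1 = Ioo 0 (r ^ p) := by
      ext t
      simp only [mem_inter_iff, mem_Iio, mem_Ioc, mem_Ioo]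
      constructor
      · rintro ⟨h, h0, -⟩; exact ⟨h0, h⟩
      · rintro ⟨h0, h⟩; exact ⟨h, h0, (h.trans_le hrp).le⟩
    change ∫ t, (Iio (r ^ p)).indicator (fun _ => ω r) t ∂μ = _
    rw [integral_indicator measurableSet_Iio, Measure.restrict_restrict measurableSet_Iio, hset,
      setIntegral_const, Real.volume_real_Ioo_of_le (Real.rpow_nonneg hr.1.le p), sub_zero,
      smul_eq_mul]
  have h_r : ∀ t ∈ Ioc (0 : ℝ) 1, ∫ r, K (t, r) ∂μ = wTail ω (t ^ p⁻¹) := by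
    intro t ht
    have ha : 0 ≤ t ^ p⁻¹ := Real.rpow_nonneg ht.1.le _
    have hset : Ioi (t ^ p⁻¹) ∩ Ioc 0 1 = Ioc (t ^ p⁻¹) 1 := by
      ext r
      simp only [mem_inter_iff, mem_Ioi, mem_Ioc]
      constructor
      · rintro ⟨h, -, h1⟩; exact ⟨h, h1⟩
      · rintro ⟨h, h1⟩; exact ⟨h, ha.trans_lt h, h1⟩
    rw [wTail, intervalIntegral.integral_of_le (Real.rpow_le_one ht.1.le ht.2 (by positivity)),
      ← hset, ← Measure.restrict_restrict measurableSet_Ioi, ← integral_indicator measurableSet_Ioi]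
    refine setIntegral_congr_fun measurableSet_Ioc fun r hr => ?_
    simp only [K, indicator, mem_ofPred_eq, mem_Ioi,
      Real.rpow_inv_lt_iff_of_pos ht.1.le hr.1.le hp]
  calc wMoment ω p = ∫ r, ∫ t, K (t, r) ∂μ ∂μ := by
        rw [wMoment, intervalIntegral.integral_of_le zero_le_one]
        exact setIntegral_congr_fun measurableSet_Ioc fun r hr => (h_t r hr).symm
    _ = ∫ t, ∫ r, K (t, r) ∂μ ∂μ := (integral_integral_swap (f := fun t r => K (t, r)) hK).symm
    _ = ∫ t in (0 : ℝ)..1, wTail ω (t ^ p⁻¹) := by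
        rw [intervalIntegral.integral_of_le zero_le_one]
        exact setIntegral_congr_fun measurableSet_Ioc h_r

theorem wMoment_half_le {ω : ℂ → ℝ} (hω : IntervalIntegrable (fun s : ℝ => ω s) volume 0 1)
    (hmono : AntitoneOn (wTail ω) (Icc 0 1)) {C : ℝ}
    (hsq : ∀ u ∈ Icc (0 : ℝ) 1, wTail ω (u ^ 2) ≤ C * wTail ω u) {x : ℝ} (hx : 0 < x) :
    wMoment ω (x / 2) ≤ C * wMoment ω x := by
  have hmem : ∀ {q : ℝ}, 0 < q → ∀ t ∈ Icc (0 : ℝ) 1, t ^ q ∈ Icc (0 : ℝ) 1 :=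
    fun hq t ht => ⟨Real.rpow_nonneg ht.1 _, Real.rpow_le_one ht.1 ht.2 hq.le⟩
  have hint : ∀ {q : ℝ}, 0 < q →
      IntervalIntegrable (fun t : ℝ => wTail ω (t ^ q)) volume 0 1 := fun hq =>
    AntitoneOn.intervalIntegrable (by
      rw [uIcc_of_le zero_le_one]
      exact fun a ha b hb hab =>
        hmono (hmem hq a ha) (hmem hq b hb) (Real.rpow_le_rpow ha.1 hab hq.le))
  rw [wMoment_eq_integral_wTail hω (half_pos hx), wMoment_eq_integral_wTail hω hx,
    ← intervalIntegral.integral_const_mul]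
  refine intervalIntegral.integral_mono_on zero_le_one (hint (by positivity))
    ((hint (by positivity)).const_mul C) fun t ht => ?_
  have hsplit : t ^ (x / 2)⁻¹ = (t ^ x⁻¹) ^ 2 := by
    rw [← Real.rpow_mul_natCast ht.1, inv_div, Nat.cast_ofNat, inv_mul_eq_div]
  rw [hsplit]
  exact hsq _ (hmem (inv_pos.mpr hx) t ht)

/-- estimate for generalized moments with polynomial factors. -/
theorem stmt_8 (ω : ℂ → ℝ) (hω : IsRadialWeight ω) (hD : Dhat ω) (N : ℕ) :
    ∃ C : ℝ, 0 < C ∧ ∀ (k : ℕ) (n y : Fin k → ℕ), (∑ j, n j) = N →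
      ∀ x : ℝ, 0 < x →
        (∫ r in (0:ℝ)..1, r ^ x * (∏ j, (1 - r ^ (y j)) ^ (n j)) * ω ((r : ℂ))) ≤
          C * (∏ j, ((y j : ℝ)) ^ (n j)) * (wMoment ω x / x ^ N) := by
  have hint := hω.intervalIntegrable
  have hmono := wTail_antitoneOn hint fun s _ => hω.nonneg s
  obtain ⟨C, hC, hsq⟩ := hD.wTail_sq_le hmono
  have hN : (0 : ℝ) < (2 * N) ^ N := by
    rcases N.eq_zero_or_pos with rfl | hN
    · simp
    · positivity
  refine ⟨(2 * N) ^ N * C, by positivity, fun k n y hn x hx => ?_⟩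
  set P := ∏ j, (y j : ℝ) ^ n j
  calc (∫ r in (0:ℝ)..1, r ^ x * (∏ j, (1 - r ^ (y j)) ^ (n j)) * ω r)
      ≤ ∫ r in (0:ℝ)..1, P * (2 * N) ^ N / x ^ N * (r ^ (x / 2) * ω r) := by
        refine intervalIntegral.integral_mono_on zero_le_one
          (hint.continuousOn_mul
            ((Real.continuous_rpow_const hx.le).mul (by fun_prop)).continuousOn) ?_ fun r hr => ?_
        · exact (hint.continuousOn_mul
            (Real.continuous_rpow_const (half_pos hx).le).continuousOn).const_mul _
        · rw [← mul_assoc, ← hn]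
          exact mul_le_mul_of_nonneg_right
            (rpow_mul_prod_one_sub_pow_le _ n y hx hr.1 hr.2) (hω.nonneg r)
    _ = P * (2 * N) ^ N / x ^ N * wMoment ω (x / 2) := intervalIntegral.integral_const_mul _ _
    _ ≤ P * (2 * N) ^ N / x ^ N * (C * wMoment ω x) := by
        gcongr
        exact wMoment_half_le hint hmono hsq hx
    _ = (2 * N) ^ N * C * P * (wMoment ω x / x ^ N) := by ring
end
end

section
/- Let ω and ν be radial weights and let f be analytic on 𝔻 with f ∈ L¹_ω and sup_{z∈𝔻} |V_{ω,ν̂}(f)(z)| < ∞. Then for every 0 < r < 1, the dilation f_r(z) = f(rz) satisfies sup_{z∈𝔻} |V_{ω,ν̂}(f_r)(z)| ≤ sup_{z∈𝔻} |V_{ω,ν̂}(f)(z)|. -/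
open MeasureTheory Real Set

noncomputable section

/-!
Expanding the conjugated kernel of `ων̂` as `Σₙ zⁿ conj(ζ)ⁿ / (2 (ων̂)_{2n+1})`, which converges
absolutely because `(ων̂)_{2n+1} ≥ t^{2n+1} (ων̂)^(t)` for every `t < 1`, turns
`∫ f(rζ) conj(B_z(ζ)) ω(ζ) dA(ζ)` into `Σₙ zⁿ / (2 (ων̂)_{2n+1}) ∫ f(rζ) conj(ζ)ⁿ ω dA`.
As `ω` is radial, rotations of `𝔻` kill every Taylor coefficient of `f` except the `n`-th in the
last integral, which is therefore `rⁿ ∫ f conj(ζ)ⁿ ω dA`. Hence the integral for `f_r` at `z` is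
the integral for `f` at `rz`, and since `ν̂` decreases, `|V(f_r)(z)| ≤ |V(f)(rz)|`.
-/

open Metric ComplexConjugate
open scoped NNReal

lemma unitDisc_eq_ball : unitDisc = ball (0 : ℂ) 1 := by
  ext z; simp [unitDisc]

lemma measurableSet_unitDisc : MeasurableSet unitDisc :=
  unitDisc_eq_ball ▸ measurableSet_ball

lemma measurePreserving_rotation (a : Circle) : MeasurePreserving (rotation a) dA dA :=
  ⟨(rotation a).continuous.measurable,
    by rw [dA, Measure.map_smul, (rotation a).measurePreserving.map_eq]⟩

lemma setIntegral_ball_comp_circle_mul (a : Circle) (g : ℂ → ℂ) (t : ℝ) :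
    ∫ ζ in ball 0 t, g (a * ζ) ∂dA = ∫ ζ in ball 0 t, g ζ ∂dA := by
  have h := (measurePreserving_rotation a).setIntegral_preimage_emb
    (rotation a).toHomeomorph.measurableEmbedding g (ball 0 t)
  rw [LinearIsometryEquiv.preimage_ball, map_zero] at h
  simpa [rotation_apply] using h

/-- Rotating by `exp (iπ / (m - n))` multiplies the integrand by `-1`. -/
lemma setIntegral_ball_pow_mul_conj_pow_eq_zero {ω : ℂ → ℝ} (hω : ∀ z : ℂ, ω z = ω ‖z‖)
    {m n : ℕ} (hmn : m ≠ n) (t : ℝ) :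
    ∫ ζ in ball 0 t, ζ ^ m * conj ζ ^ n * ω ζ ∂dA = 0 := by
  set k : ℤ := m - n
  have hk : (k : ℝ) ≠ 0 := by exact_mod_cast sub_ne_zero.2 (Nat.cast_injective.ne hmn)
  set a := Circle.exp (π / k)
  have ha : (a : ℂ) ^ m * conj (a : ℂ) ^ n = Circle.exp π := by
    rw [← Circle.coe_inv_eq_conj, ← Circle.coe_pow, ← Circle.coe_pow, ← Circle.coe_mul,
      ← zpow_natCast, ← zpow_natCast, inv_zpow', ← zpow_add, ← Circle.exp_intCast_mul,
      ← sub_eq_add_neg, mul_div_cancel₀ _ hk]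
  have hrot : ∀ ζ : ℂ, (a * ζ) ^ m * conj (a * ζ) ^ n * ω (a * ζ)
      = Circle.exp π * (ζ ^ m * conj ζ ^ n * ω ζ) := by
    intro ζ
    rw [hω (a * ζ), norm_mul, Circle.norm_coe, one_mul, ← hω, ← ha, map_mul]
    ring
  have h := setIntegral_ball_comp_circle_mul a (fun ζ => ζ ^ m * conj ζ ^ n * ω ζ) t
  simp only [hrot, integral_const_mul] at h
  have hne : (Circle.exp π : ℂ) ≠ 1 := Circle.coe_eq_one.not.2 Circle.exp_pi_ne_one
  exact (mul_left_eq_self₀.1 h).resolve_left hne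

theorem DifferentiableOn.hasFPowerSeriesOnBall_of_ball {E : Type*} [NormedAddCommGroup E]
    [NormedSpace ℂ E] [CompleteSpace E] {f : ℂ → E} {c : ℂ} {R r : ℝ≥0}
    (hf : DifferentiableOn ℂ f (ball c R)) (hr : 0 < r) (hrR : r < R) :
    HasFPowerSeriesOnBall f (cauchyPowerSeries f c r) c R := by
  have h : ∀ r' : ℝ≥0, 0 < r' → r' < R →
      HasFPowerSeriesOnBall f (cauchyPowerSeries f c r) c r' := fun r' h0 h1 =>
    ((hf.mono (closedBall_subset_ball hrR)).hasFPowerSeriesOnBall hr).exchange_radius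
      ((hf.mono (closedBall_subset_ball h1)).hasFPowerSeriesOnBall h0)
  refine ⟨ENNReal.le_of_forall_pos_nnreal_lt fun r' h0 h1 => (h r' h0 ?_).r_le,
    ENNReal.coe_pos.2 (hr.trans hrR), fun {y} hy => ?_⟩
  · exact_mod_cast h1
  · obtain ⟨r', hyr', hr'R⟩ := exists_between (mem_eball_zero_iff.1 hy)
    lift r' to ℝ≥0 using hr'R.ne_top
    exact (h r' (ENNReal.coe_pos.1 (pos_of_gt hyr')) (ENNReal.coe_lt_coe.1 hr'R)).hasSum
      (mem_eball_zero_iff.2 hyr')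

lemma setIntegral_ball_comp_mul_conj_pow {ω : ℂ → ℝ} (hrad : ∀ z : ℂ, ω z = ω ‖z‖)
    (hω : IntegrableOn ω unitDisc dA) {f : ℂ → ℂ} {p : FormalMultilinearSeries ℂ ℂ ℂ}
    (hp : HasFPowerSeriesOnBall f p 0 1) (n : ℕ) {ρ : ℂ} {t : ℝ} (ht0 : 0 ≤ t) (ht1 : t ≤ 1)
    (hρt : ‖ρ‖ * t < 1) :
    ∫ ζ in ball 0 t, f (ρ * ζ) * conj ζ ^ n * ω ζ ∂dA
      = p.coeff n * ρ ^ n * ∫ ζ in ball 0 t, ζ ^ n * conj ζ ^ n * ω ζ ∂dA := by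
  have hsub : ball (0 : ℂ) t ⊆ unitDisc := unitDisc_eq_ball ▸ ball_subset_ball ht1
  have hωt : Integrable (fun ζ => ω ζ) (dA.restrict (ball 0 t)) := hω.mono_set hsub
  have hs : Summable fun m => ‖p.coeff m‖ * (‖ρ‖ * t) ^ m := by
    have := p.summable_norm_mul_pow (r := ⟨‖ρ‖ * t, by positivity⟩)
      ((ENNReal.coe_lt_one_iff.2 (by exact_mod_cast hρt)).trans_le hp.r_le)
    simp only [p.norm_apply_eq_norm_coef] at this
    exact this
  have hsum := hasSum_integral_of_dominated_convergence (μ := dA.restrict (ball 0 t))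
    (F := fun m ζ => p.coeff m * ρ ^ m * (ζ ^ m * conj ζ ^ n * ω ζ))
    (f := fun ζ => f (ρ * ζ) * conj ζ ^ n * ω ζ)
    (fun m ζ => ‖p.coeff m‖ * (‖ρ‖ * t) ^ m * |ω ζ|) ?meas ?bound
    (ae_of_all _ fun ζ => hs.mul_right _) ((hωt.abs.const_mul _).congr
      (ae_of_all _ fun ζ => (tsum_mul_right).symm)) ?lim
  case meas =>
    intro m
    exact aestronglyMeasurable_const.mul ((Continuous.aestronglyMeasurable (by fun_prop)).mul
      (Complex.continuous_ofReal.comp_aestronglyMeasurable hωt.aestronglyMeasurable))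
  case bound =>
    intro m
    refine ae_restrict_of_forall_mem measurableSet_ball fun ζ hζ => ?_
    have hζt : ‖ζ‖ < t := mem_ball_zero_iff.1 hζ
    have hζ1 : ‖ζ‖ ^ n ≤ 1 := pow_le_one₀ (norm_nonneg _) (hζt.le.trans ht1)
    simp only [norm_mul, norm_pow, Complex.norm_conj, Complex.norm_real, Real.norm_eq_abs]
    calc ‖p.coeff m‖ * ‖ρ‖ ^ m * (‖ζ‖ ^ m * ‖ζ‖ ^ n * |ω ζ|)
        ≤ ‖p.coeff m‖ * ‖ρ‖ ^ m * (t ^ m * 1 * |ω ζ|) := by gcongr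
      _ = ‖p.coeff m‖ * (‖ρ‖ * t) ^ m * |ω ζ| := by ring
  case lim =>
    refine ae_restrict_of_forall_mem measurableSet_ball fun ζ hζ => ?_
    have hy : ρ * ζ ∈ eball (0 : ℂ) 1 := by
      simp only [mem_eball, edist_dist, dist_zero_right, ENNReal.ofReal_lt_one, norm_mul]
      calc ‖ρ‖ * ‖ζ‖ ≤ ‖ρ‖ * t := by gcongr; exact (mem_ball_zero_iff.1 hζ).le
        _ < 1 := hρt
    have := (hp.hasSum hy).mul_right (conj ζ ^ n * ω ζ)
    simp only [zero_add, p.apply_eq_pow_smul_coeff, smul_eq_mul] at this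
    rw [mul_assoc]
    convert this using 2 with m
    · rfl
    · ring
  have hterm : ∀ m ≠ n, p.coeff m * ρ ^ m * ∫ ζ in ball 0 t, ζ ^ m * conj ζ ^ n * ω ζ ∂dA = 0 :=
    fun m hm => by rw [setIntegral_ball_pow_mul_conj_pow_eq_zero hrad hm, mul_zero]
  simp only [integral_const_mul] at hsum
  exact hsum.unique (hasSum_single n hterm)

lemma tendsto_setIntegral_ball_sub_inv {α E : Type*} [PseudoMetricSpace α] [MeasurableSpace α]
    [OpensMeasurableSpace α] [NormedAddCommGroup E] [NormedSpace ℝ E] {μ : Measure α}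
    {g : α → E} {x : α} {r : ℝ} (hg : IntegrableOn g (ball x r) μ) :
    Filter.Tendsto (fun k : ℕ => ∫ ζ in ball x (r - (k + 1 : ℝ)⁻¹), g ζ ∂μ) Filter.atTop
      (nhds (∫ ζ in ball x r, g ζ ∂μ)) := by
  have hmono : Monotone fun k : ℕ => ball x (r - (k + 1 : ℝ)⁻¹) := fun k l hkl =>
    ball_subset_ball (sub_le_sub_left (inv_anti₀ (by positivity) (by gcongr)) r)
  have hunion : ⋃ k : ℕ, ball x (r - (k + 1 : ℝ)⁻¹) = ball x r := by
    refine subset_antisymm (iUnion_subset fun k => ball_subset_ball (by simp; positivity))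
      fun z hz => mem_iUnion.2 ?_
    obtain ⟨k, hk⟩ := exists_nat_one_div_lt (sub_pos.2 (mem_ball.1 hz))
    exact ⟨k, mem_ball.2 (by rw [one_div] at hk; linarith)⟩
  have := tendsto_setIntegral_of_monotone (fun k => measurableSet_ball) hmono (hunion ▸ hg)
  rwa [hunion] at this

lemma integrableOn_mul_conj_pow {ω : ℂ → ℝ} {g : ℂ → ℂ}
    (hg : IntegrableOn (fun ζ => g ζ * ω ζ) unitDisc dA) (n : ℕ) :
    IntegrableOn (fun ζ => g ζ * conj ζ ^ n * ω ζ) unitDisc dA := by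
  refine (hg.mul_continuousOn_of_subset (g' := fun ζ => conj ζ ^ n) (by fun_prop)
    measurableSet_unitDisc (isCompact_closedBall 0 1)
    (unitDisc_eq_ball ▸ ball_subset_closedBall)).congr_fun (fun ζ _ => by ring)
    measurableSet_unitDisc

/-- The power series of `f` need not converge in `L¹_ω` on all of `𝔻`, so the moments of `f`
are reached as limits over the balls of radius `1 - 1/(k+1)`. -/
theorem setIntegral_comp_mul_conj_pow {ω : ℂ → ℝ} (hrad : ∀ z : ℂ, ω z = ω ‖z‖)
    (hω : IntegrableOn ω unitDisc dA) {f : ℂ → ℂ} (hf : DifferentiableOn ℂ f unitDisc)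
    (hfω : IntegrableOn (fun ζ => f ζ * ω ζ) unitDisc dA) (n : ℕ) {ρ : ℂ} (hρ : ‖ρ‖ < 1) :
    ∫ ζ in unitDisc, f (ρ * ζ) * conj ζ ^ n * ω ζ ∂dA
      = ρ ^ n * ∫ ζ in unitDisc, f ζ * conj ζ ^ n * ω ζ ∂dA := by
  obtain ⟨p, hp⟩ : ∃ p, HasFPowerSeriesOnBall f p 0 1 := by
    rw [unitDisc_eq_ball] at hf
    have := DifferentiableOn.hasFPowerSeriesOnBall_of_ball (R := 1) (r := 1 / 2)
      (by simpa using hf) (by norm_num) (by norm_num)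
    rw [ENNReal.coe_one] at this
    exact ⟨_, this⟩
  have hk : ∀ k : ℕ, 0 ≤ 1 - (k + 1 : ℝ)⁻¹ := fun k =>
    sub_nonneg.2 (inv_le_one_of_one_le₀ (by simp))
  have hmonomial : IntegrableOn (fun ζ => ζ ^ n * conj ζ ^ n * ω ζ) unitDisc dA :=
    integrableOn_mul_conj_pow (IntegrableOn.continuousOn_mul_of_subset (by fun_prop) hω.ofReal
      (isCompact_closedBall 0 1) measurableSet_unitDisc
      (unitDisc_eq_ball ▸ ball_subset_closedBall)) n
  have hf_lim := tendsto_setIntegral_ball_sub_inv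
    (unitDisc_eq_ball ▸ integrableOn_mul_conj_pow hfω n)
  have hmonomial_lim :=
    (tendsto_setIntegral_ball_sub_inv (unitDisc_eq_ball ▸ hmonomial)).const_mul (p.coeff n)
  have hf_eq : ∫ ζ in ball 0 1, f ζ * conj ζ ^ n * ω ζ ∂dA
      = p.coeff n * ∫ ζ in ball 0 1, ζ ^ n * conj ζ ^ n * ω ζ ∂dA := by
    refine tendsto_nhds_unique (hf_lim.congr fun k => ?_) hmonomial_lim
    simpa using setIntegral_ball_comp_mul_conj_pow hrad hω hp n (ρ := 1) (hk k)
      (by simp; positivity) (by simp; positivity)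
  rw [unitDisc_eq_ball, hf_eq, setIntegral_ball_comp_mul_conj_pow hrad hω hp n zero_le_one
    le_rfl (by simpa using hρ)]
  ring

lemma hasSum_conj_bergmanKernel {μ : ℂ → ℝ} {z ζ : ℂ}
    (hsum : Summable fun n : ℕ => ‖z‖ ^ n / (2 * wMoment μ (2 * n + 1))) (hζ : ‖ζ‖ ≤ 1) :
    HasSum (fun n : ℕ => z ^ n / (2 * (wMoment μ (2 * n + 1) : ℂ)) * conj ζ ^ n)
      (conj (bergmanKernel μ z ζ)) := by
  have hs : Summable fun n : ℕ => (conj z * ζ) ^ n / (2 * (wMoment μ (2 * n + 1) : ℂ)) := by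
    refine Summable.of_norm_bounded hsum.abs fun n => ?_
    rw [norm_div, norm_mul, norm_pow, norm_mul, Complex.norm_conj, Complex.norm_real,
      abs_div, abs_mul, abs_pow, abs_norm, Complex.norm_two, abs_two, Real.norm_eq_abs]
    gcongr
    exact mul_le_of_le_one_right (norm_nonneg _) hζ
  convert Complex.hasSum_conj'.2 hs.hasSum using 2 with n
  · simp only [map_div₀, map_mul, map_pow, Complex.conj_conj, Complex.conj_ofReal, map_ofNat]
    ring
  · rfl

theorem hasSum_setIntegral_mul_conj_bergmanKernel {μ ω : ℂ → ℝ} {g : ℂ → ℂ} {z : ℂ}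
    (hsum : Summable fun n : ℕ => ‖z‖ ^ n / (2 * wMoment μ (2 * n + 1)))
    (hg : IntegrableOn (fun ζ => g ζ * ω ζ) unitDisc dA) :
    HasSum (fun n : ℕ => z ^ n / (2 * (wMoment μ (2 * n + 1) : ℂ)) *
        ∫ ζ in unitDisc, g ζ * conj ζ ^ n * ω ζ ∂dA)
      (∫ ζ in unitDisc, g ζ * conj (bergmanKernel μ z ζ) * ω ζ ∂dA) := by
  set a : ℕ → ℂ := fun n => z ^ n / (2 * (wMoment μ (2 * n + 1) : ℂ))
  have ha : ∀ n, ‖a n‖ = |‖z‖ ^ n / (2 * wMoment μ (2 * n + 1))| := fun n => by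
    simp [a, abs_div, abs_mul]
  have hsum_int := hasSum_integral_of_dominated_convergence (μ := dA.restrict unitDisc)
    (F := fun n ζ => a n * (g ζ * conj ζ ^ n * ω ζ))
    (f := fun ζ => g ζ * conj (bergmanKernel μ z ζ) * ω ζ)
    (fun n ζ => ‖a n‖ * ‖g ζ * ω ζ‖) ?meas ?bound
    (ae_of_all _ fun ζ => (hsum.abs.congr fun n => (ha n).symm).mul_right _)
    ((hg.norm.const_mul _).congr (ae_of_all _ fun ζ => tsum_mul_right.symm)) ?lim
  case meas =>
    intro n
    refine ((hg.aestronglyMeasurable.mul (Continuous.aestronglyMeasurable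
      (by fun_prop : Continuous fun ζ : ℂ => conj ζ ^ n))).const_mul (a n)).congr
      (ae_of_all _ fun ζ => ?_)
    simp only [Pi.mul_apply]
    ring
  case bound =>
    intro n
    refine ae_restrict_of_forall_mem measurableSet_unitDisc fun ζ hζ => ?_
    have hζ1 : ‖ζ‖ ^ n ≤ 1 := pow_le_one₀ (norm_nonneg _) (le_of_lt hζ)
    calc ‖a n * (g ζ * conj ζ ^ n * ω ζ)‖ = ‖a n‖ * (‖g ζ * ω ζ‖ * ‖ζ‖ ^ n) := by
          simp only [norm_mul, norm_pow, Complex.norm_conj]; ring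
      _ ≤ ‖a n‖ * (‖g ζ * ω ζ‖ * 1) := by gcongr
      _ = ‖a n‖ * ‖g ζ * ω ζ‖ := by rw [mul_one]
  case lim =>
    refine ae_restrict_of_forall_mem measurableSet_unitDisc fun ζ hζ => ?_
    have := ((hasSum_conj_bergmanKernel hsum (le_of_lt hζ)).mul_left (g ζ)).mul_right (ω ζ : ℂ)
    convert this using 2 with n
    · rfl
    · simp only [a]; ring
  simpa only [integral_const_mul] using hsum_int

theorem setIntegral_comp_mul_conj_bergmanKernel {μ ω : ℂ → ℝ}
    (hμ : ∀ s : ℝ, 0 ≤ s → s < 1 → Summable fun n : ℕ => s ^ n / (2 * wMoment μ (2 * n + 1)))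
    (hrad : ∀ z : ℂ, ω z = ω ‖z‖) (hω : IntegrableOn ω unitDisc dA) {f : ℂ → ℂ}
    (hf : DifferentiableOn ℂ f unitDisc) (hfω : IntegrableOn (fun ζ => f ζ * ω ζ) unitDisc dA)
    {ρ z : ℂ} (hρ : ‖ρ‖ < 1) (hz : ‖z‖ < 1) :
    ∫ ζ in unitDisc, f (ρ * ζ) * conj (bergmanKernel μ z ζ) * ω ζ ∂dA
      = ∫ ζ in unitDisc, f ζ * conj (bergmanKernel μ (ρ * z) ζ) * ω ζ ∂dA := by
  have hmaps : MapsTo (fun ζ => ρ * ζ) (closedBall 0 1) unitDisc := fun ζ hζ => by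
    show ‖ρ * ζ‖ < 1
    rw [norm_mul]
    exact (mul_le_of_le_one_right (norm_nonneg ρ) (mem_closedBall_zero_iff.1 hζ)).trans_lt hρ
  have hfρω : IntegrableOn (fun ζ => f (ρ * ζ) * ω ζ) unitDisc dA :=
    IntegrableOn.continuousOn_mul_of_subset (hf.continuousOn.comp (by fun_prop) hmaps)
      hω.ofReal (isCompact_closedBall 0 1) measurableSet_unitDisc
      (unitDisc_eq_ball ▸ ball_subset_closedBall)
  have hρz : ‖ρ * z‖ < 1 := by
    rw [norm_mul]; exact (mul_le_of_le_one_left (norm_nonneg z) hρ.le).trans_lt hz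
  refine (hasSum_setIntegral_mul_conj_bergmanKernel (hμ _ (norm_nonneg z) hz) hfρω).unique ?_
  convert hasSum_setIntegral_mul_conj_bergmanKernel (hμ _ (norm_nonneg _) hρz) hfω using 2 with n
  rw [setIntegral_comp_mul_conj_pow hrad hω hf hfω n hρ, mul_pow]
  ring

/-- A non-integrable `μ` would give the junk value `wTail μ r = 0`. -/
lemma intervalIntegrable_of_wTail_pos {μ : ℂ → ℝ} {r : ℝ} (h : 0 < wTail μ r) :
    IntervalIntegrable (fun s : ℝ => μ s) volume r 1 := by
  by_contra hint
  exact h.ne' (intervalIntegral.integral_undef hint)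

lemma rpow_mul_wTail_le_wMoment {μ : ℂ → ℝ} (hμ0 : ∀ s : ℝ, 0 ≤ s → s ≤ 1 → 0 ≤ μ s)
    (hint : IntervalIntegrable (fun s : ℝ => μ s) volume 0 1) {x t : ℝ} (hx : 0 ≤ x)
    (ht0 : 0 ≤ t) (ht1 : t ≤ 1) : t ^ x * wTail μ t ≤ wMoment μ x := by
  have hint_t : IntervalIntegrable (fun s : ℝ => μ s) volume t 1 :=
    hint.mono_set (uIcc_subset_uIcc_right (by simp [ht0, ht1]))
  have hxint : IntervalIntegrable (fun s : ℝ => s ^ x * μ s) volume 0 1 :=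
    hint.continuousOn_mul (Real.continuous_rpow_const hx).continuousOn
  calc t ^ x * wTail μ t = ∫ s in t..1, t ^ x * μ s :=
        (intervalIntegral.integral_const_mul _ _).symm
    _ ≤ ∫ s in t..1, s ^ x * μ s := by
      refine intervalIntegral.integral_mono_on ht1 (hint_t.const_mul _)
        (hxint.mono_set (uIcc_subset_uIcc_right (by simp [ht0, ht1]))) fun s hs => ?_
      gcongr
      · exact hμ0 s (ht0.trans hs.1) hs.2
      · exact hs.1
    _ ≤ wMoment μ x := by
      refine intervalIntegral.integral_mono_interval ht0 ht1 le_rfl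
        (ae_restrict_of_forall_mem measurableSet_Ioc fun s hs => ?_) hxint
      exact mul_nonneg (Real.rpow_nonneg hs.1.le x) (hμ0 s hs.1.le hs.2)

theorem summable_pow_div_wMoment {μ : ℂ → ℝ} (hμ0 : ∀ s : ℝ, 0 ≤ s → s ≤ 1 → 0 ≤ μ s)
    (hμ : ∀ t : ℝ, 0 ≤ t → t < 1 → 0 < wTail μ t) {s : ℝ} (hs0 : 0 ≤ s) (hs1 : s < 1) :
    Summable fun n : ℕ => s ^ n / (2 * wMoment μ (2 * n + 1)) := by
  obtain ⟨q, hsq, hq1⟩ := exists_between hs1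
  have hq0 : 0 < q := hs0.trans_lt hsq
  set t := √q
  have ht0 : 0 < t := Real.sqrt_pos.2 hq0
  have ht1 : t < 1 := (Real.sqrt_lt' one_pos).2 (by simpa using hq1)
  have hT := hμ t ht0.le ht1
  have hM : ∀ n : ℕ, q ^ n * (t * wTail μ t) ≤ wMoment μ (2 * n + 1) := fun n => by
    refine le_of_eq_of_le ?_ (rpow_mul_wTail_le_wMoment hμ0
      (intervalIntegrable_of_wTail_pos (hμ 0 le_rfl one_pos)) (x := 2 * n + 1) (by positivity)
      ht0.le ht1.le)
    rw [show (2 * n + 1 : ℝ) = ((2 * n + 1 : ℕ) : ℝ) by push_cast; ring, Real.rpow_natCast,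
      pow_succ, pow_mul, Real.sq_sqrt hq0.le, mul_assoc]
  refine Summable.of_nonneg_of_le (fun n => div_nonneg (pow_nonneg hs0 n)
      (mul_nonneg zero_le_two ((by positivity : 0 ≤ q ^ n * (t * wTail μ t)).trans (hM n))))
    (fun n => ?_) ((summable_geometric_of_lt_one (div_nonneg hs0 hq0.le)
      ((div_lt_one hq0).2 hsq)).mul_right (1 / (2 * (t * wTail μ t))))
  calc s ^ n / (2 * wMoment μ (2 * n + 1)) ≤ s ^ n / (2 * (q ^ n * (t * wTail μ t))) := by
        gcongr; exact hM n
    _ = (s / q) ^ n * (1 / (2 * (t * wTail μ t))) := by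
        rw [div_pow]
        field_simp

namespace IsRadialWeight

variable {ν : ℂ → ℝ}

lemma intervalIntegrable_s13 (hν : IsRadialWeight ν) :
    IntervalIntegrable (fun s : ℝ => ν s) volume 0 1 :=
  intervalIntegrable_of_wTail_pos (hν.tailPos 0 le_rfl one_pos)

lemma wTail_nonneg (hν : IsRadialWeight ν) {r : ℝ} (hr : r ≤ 1) : 0 ≤ wTail ν r :=
  intervalIntegral.integral_nonneg hr fun _ _ => hν.nonneg _

lemma wTail_antitoneOn (hν : IsRadialWeight ν) : AntitoneOn (wTail ν) (Icc 0 1) :=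
  fun a ha b hb hab => intervalIntegral.integral_mono_interval hab hb.2 le_rfl
    (ae_of_all _ fun _ => hν.nonneg _) (hν.intervalIntegrable_s13.mono_set
      (uIcc_subset_uIcc_right (by simp [ha.1, ha.2])))

lemma tailFun_nonneg (hν : IsRadialWeight ν) {z : ℂ} (hz : ‖z‖ ≤ 1) : 0 ≤ tailFun ν z :=
  hν.wTail_nonneg hz

lemma continuousOn_wTail (hν : IsRadialWeight ν) : ContinuousOn (wTail ν) (Icc 0 1) := by
  have := intervalIntegral.continuousOn_primitive_interval_left
    ((intervalIntegrable_iff' (μ := volume)).1 hν.intervalIntegrable_s13)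
  rwa [uIcc_of_le zero_le_one] at this

end IsRadialWeight

lemma tailFun_ofReal (ν : ℂ → ℝ) {s : ℝ} (hs : 0 ≤ s) : tailFun ν s = wTail ν s := by
  simp [tailFun, abs_of_nonneg hs]

/-- Since `ν̂ > 0` on `[0, 1)`, the product `ω ν̂` has the support of `ω` up to the endpoint `1`. -/
theorem wTail_mul_tailFun_pos {ω ν : ℂ → ℝ} (hω : IsRadialWeight ω) (hν : IsRadialWeight ν)
    {t : ℝ} (ht0 : 0 ≤ t) (ht1 : t < 1) :
    0 < wTail (fun w => ω w * tailFun ν w) t := by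
  have hsub : uIcc t 1 ⊆ Icc 0 1 := by rw [uIcc_of_le ht1.le]; exact Icc_subset_Icc_left ht0
  have hωint : IntervalIntegrable (fun s : ℝ => ω s) volume t 1 :=
    hω.intervalIntegrable_s13.mono_set (by rw [uIcc_of_le zero_le_one]; exact hsub)
  have hcont : ContinuousOn (fun s : ℝ => tailFun ν s) (uIcc t 1) :=
    (hν.continuousOn_wTail.mono hsub).congr fun s hs => tailFun_ofReal ν (hsub hs).1
  have hnonneg : ∀ s ∈ uIoc t 1, 0 ≤ ω s * tailFun ν s := fun s hs => by
    rw [uIoc_of_le ht1.le] at hs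
    rw [tailFun_ofReal ν (ht0.trans hs.1.le)]
    exact mul_nonneg (hω.nonneg _) (hν.wTail_nonneg hs.2)
  have hωt := hω.tailPos t ht0 ht1
  rw [wTail, intervalIntegral.integral_pos_iff_support_of_nonneg_ae'
    (ae_of_all _ fun _ => hω.nonneg _) hωint] at hωt
  rw [wTail, intervalIntegral.integral_pos_iff_support_of_nonneg_ae'
    (ae_restrict_of_forall_mem measurableSet_uIoc hnonneg) (hωint.mul_continuousOn hcont)]
  refine ⟨ht1, hωt.2.trans_le ?_⟩
  rw [measure_congr ((ae_eq_refl _).inter Ioo_ae_eq_Ioc).symm]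
  refine measure_mono fun s ⟨hs, hst⟩ => ⟨?_, Ioo_subset_Ioc_self hst⟩
  rw [Function.mem_support, tailFun_ofReal ν (ht0.trans hst.1.le)]
  exact mul_ne_zero hs (hν.tailPos s (ht0.trans hst.1.le) hst.2).ne'

lemma IsRadialWeight.integrableOn_mul {ω : ℂ → ℝ} (hω : IsRadialWeight ω) {f : ℂ → ℂ}
    (hf : AEStronglyMeasurable f (dA.restrict unitDisc))
    (hfL1 : IntegrableOn (fun z => ‖f z‖ * ω z) unitDisc dA) :
    IntegrableOn (fun z => f z * ω z) unitDisc dA :=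
  hfL1.mono' (hf.mul hω.integrable.ofReal.aestronglyMeasurable)
    (ae_of_all _ fun z => by simp [abs_of_nonneg (hω.nonneg z)])

/-- the dilations f_r do not increase ‖V_{ω,ν̂}(·)‖_∞. -/
theorem stmt_13 (ω ν : ℂ → ℝ) (hω : IsRadialWeight ω) (hν : IsRadialWeight ν)
    (f : ℂ → ℂ) (hf : DifferentiableOn ℂ f unitDisc)
    (hfL1 : IntegrableOn (fun z => ‖f z‖ * ω z) unitDisc dA)
    (hbdd : BddAbove (VSet ω (tailFun ν) f)) :
    ∀ r : ℝ, 0 < r → r < 1 → ∀ z ∈ unitDisc,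
      ‖Vop ω (tailFun ν) (fun w => f ((r : ℂ) * w)) z‖ ≤
        VSup ω (tailFun ν) f := by
  intro r hr0 hr1 z hz
  have hz1 : ‖z‖ < 1 := hz
  have hr : ‖(r : ℂ)‖ < 1 := by simpa [abs_of_pos hr0] using hr1
  have hrz : ‖(r : ℂ) * z‖ ≤ ‖z‖ := by
    rw [norm_mul]; exact mul_le_of_le_one_left (norm_nonneg z) hr.le
  have hsum (s : ℝ) (hs0 : 0 ≤ s) (hs1 : s < 1) :=
    summable_pow_div_wMoment (μ := fun w => ω w * tailFun ν w)
      (fun s hs0 hs1 => mul_nonneg (hω.nonneg _) (tailFun_ofReal ν hs0 ▸ hν.wTail_nonneg hs1))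
      (fun t ht0 ht1 => wTail_mul_tailFun_pos hω hν ht0 ht1) hs0 hs1
  have hfω := hω.integrableOn_mul
    (hf.continuousOn.aestronglyMeasurable measurableSet_unitDisc) hfL1
  have hdil := setIntegral_comp_mul_conj_bergmanKernel hsum hω.radial hω.integrable hf hfω hr hz1
  calc ‖Vop ω (tailFun ν) (fun w => f ((r : ℂ) * w)) z‖
      = tailFun ν z * ‖∫ ζ in unitDisc, f ζ * conj (bergmanKernel
          (fun w => ω w * tailFun ν w) (r * z) ζ) * ω ζ ∂dA‖ := by
        rw [Vop, hdil, norm_mul, Complex.norm_real,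
          Real.norm_of_nonneg (hν.tailFun_nonneg hz1.le)]
    _ ≤ tailFun ν (r * z) * ‖∫ ζ in unitDisc, f ζ * conj (bergmanKernel
          (fun w => ω w * tailFun ν w) (r * z) ζ) * ω ζ ∂dA‖ := by
        gcongr
        exact hν.wTail_antitoneOn ⟨norm_nonneg _, hrz.trans hz1.le⟩
          ⟨norm_nonneg _, hz1.le⟩ hrz
    _ = ‖Vop ω (tailFun ν) f (r * z)‖ := by
        rw [Vop, norm_mul, Complex.norm_real,
          Real.norm_of_nonneg (hν.tailFun_nonneg (hrz.trans hz1.le))]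
    _ ≤ VSup ω (tailFun ν) f := le_csSup hbdd ⟨_, hrz.trans_lt hz1, rfl⟩
end
end
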